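/- arXiv:2406.08983 — 4 statements merged into one kernel-verified Lean document; each statement's English description precedes it below -/
import Mathlib

section
/- Suppose 𝔽 is immersed in 𝔾 under P (every 𝔽-martingale is a 𝔾-martingale, with F_t ⊆ G_t). Then for every t, the σ-algebras F_∞ and G_t are conditionally independent given F_t under P. -/
open MeasureTheory MeasurableSpace Set Filter Function
open scoped ENNReal NNReal Topology

noncomputable section

variable {Ω : Type*}

/-- An `ℝ≥0∞`-valued stopping time w.r.t. a family of σ-algebras indexed by `ℝ≥0`. -/
def IsStoppingTimeE (F : ℝ≥0 → MeasurableSpace Ω) (T : Ω → ℝ≥0∞) : Prop :=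
  ∀ t : ℝ≥0, MeasurableSet[F t] {ω | T ω ≤ (t : ℝ≥0∞)}

/-- A predictable time: a stopping time admitting an announcing sequence. -/
def IsPredictableTimeE (F : ℝ≥0 → MeasurableSpace Ω) (T : Ω → ℝ≥0∞) : Prop :=
  IsStoppingTimeE F T ∧ ∃ Tk : ℕ → Ω → ℝ≥0∞,
    (∀ k, IsStoppingTimeE F (Tk k)) ∧
    (∀ k ω, Tk k ω ≤ Tk (k + 1) ω) ∧
    (∀ k ω, Tk k ω ≤ T ω) ∧
    (∀ k ω, 0 < T ω → Tk k ω < T ω) ∧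
    (∀ ω, Filter.Tendsto (fun k => Tk k ω) Filter.atTop (nhds (T ω)))

/-- Progressive enlargement `F^τ_t := ⋂_{s>t} (F_s ∨ σ(τ ∧ s))`. -/
def progEnlarge (F : ℝ≥0 → MeasurableSpace Ω) (τ : Ω → ℝ≥0∞) (t : ℝ≥0) : MeasurableSpace Ω :=
  ⨅ s : {s : ℝ≥0 // t < s},
    (F (s : ℝ≥0) ⊔ MeasurableSpace.comap (fun ω => min (τ ω) ((s : ℝ≥0) : ℝ≥0∞)) inferInstance)

/-- The predictable σ-algebra on `Ω × ℝ≥0`. -/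
def predictableSigma (F : ℝ≥0 → MeasurableSpace Ω) : MeasurableSpace (Ω × ℝ≥0) :=
  MeasurableSpace.generateFrom
    ({S | ∃ (A : Set Ω) (s t : ℝ≥0), MeasurableSet[F s] A ∧ S = A ×ˢ Set.Ioc s t} ∪
      {S | ∃ A : Set Ω, MeasurableSet[F 0] A ∧ S = A ×ˢ ({0} : Set ℝ≥0)})

/-- A predictable process. -/
def IsPredictableProcess (F : ℝ≥0 → MeasurableSpace Ω) (X : ℝ≥0 → Ω → ℝ) : Prop :=
  @Measurable (Ω × ℝ≥0) ℝ (predictableSigma F) _ fun p => X p.2 p.1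

/-- A bounded strongly measurable function is integrable over a finite measure. -/
lemma integrable_of_abs_le {m : MeasurableSpace Ω} {P : Measure Ω} [IsFiniteMeasure P]
    {X : Ω → ℝ} (hX : AEStronglyMeasurable X P) {C : ℝ} (hC : ∀ ω, |X ω| ≤ C) :
    Integrable X P :=
  (memLp_top_of_bound hX C (Filter.Eventually.of_forall fun ω => by
    simpa [Real.norm_eq_abs] using hC ω)).integrable le_top

/-- Key lemma: under immersion, for an integrable `F_∞`-measurable `X`,
`E[X|G_t] = E[X|F_t]` a.e. -/
lemma condexp_eq_of_immersion {m : MeasurableSpace Ω} (P : Measure Ω) [IsProbabilityMeasure P]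
    (F G : Filtration ℝ≥0 m)
    (himm : ∀ M : ℝ≥0 → Ω → ℝ, Martingale M F P → Martingale M G P)
    (t : ℝ≥0) {X : Ω → ℝ} (hXint : Integrable X P)
    (hXm : StronglyMeasurable[⨆ s : ℝ≥0, (F s : MeasurableSpace Ω)] X) :
    P[X|G t] =ᵐ[P] P[X|F t] := by
  -- the discretized filtration `n ↦ F (t + n)`
  set ℱ : Filtration ℕ m :=
    { seq := fun n => F (t + n)
      mono' := fun a b hab => F.mono (by exact add_le_add le_rfl (by exact_mod_cast hab))
      le' := fun n => F.le _ } with hℱ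
  have hsup : (⨆ s : ℝ≥0, (F s : MeasurableSpace Ω)) ≤ ⨆ n : ℕ, (ℱ n : MeasurableSpace Ω) := by
    refine iSup_le fun s => le_trans (F.mono ?_) (le_iSup (fun n => (ℱ n : MeasurableSpace Ω)) ⌈s⌉₊)
    exact le_trans (Nat.le_ceil s) le_add_self
  have hXm' : StronglyMeasurable[⨆ n : ℕ, (ℱ n : MeasurableSpace Ω)] X := hXm.mono hsup
  have htd : Tendsto (fun n => eLpNorm (P[X|ℱ n] - X) 1 P) atTop (𝓝 0) :=
    hXint.tendsto_eLpNorm_condExp hXm'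
  -- the martingale `M s = E[X|F s]` is a `G`-martingale by immersion
  have hMG : Martingale (fun s => P[X|F s]) G P := himm _ (martingale_condExp X F P)
  have hle : ∀ n : ℕ, eLpNorm (P[X|G t] - P[X|F t]) 1 P ≤ eLpNorm (P[X|ℱ n] - X) 1 P := by
    intro n
    have hn : P[P[X|ℱ n]|G t] =ᵐ[P] P[X|F t] := hMG.condExp_ae_eq (le_self_add : t ≤ t + n)
    have h2 : P[X|G t] - P[X|F t] =ᵐ[P] P[X - P[X|ℱ n]|G t] := by
      calc P[X|G t] - P[X|F t]
          =ᵐ[P] P[X|G t] - P[P[X|ℱ n]|G t] :=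
            EventuallyEq.sub (EventuallyEq.refl _ _) hn.symm
        _ =ᵐ[P] P[X - P[X|ℱ n]|G t] := (condExp_sub hXint integrable_condExp _).symm
    calc eLpNorm (P[X|G t] - P[X|F t]) 1 P
        = eLpNorm (P[X - P[X|ℱ n]|G t]) 1 P := eLpNorm_congr_ae h2
      _ ≤ eLpNorm (X - P[X|ℱ n]) 1 P := eLpNorm_one_condExp_le_eLpNorm _
      _ = eLpNorm (P[X|ℱ n] - X) 1 P := by rw [← neg_sub, eLpNorm_neg]
  have h0 : eLpNorm (P[X|G t] - P[X|F t]) 1 P = 0 :=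
    le_antisymm (ge_of_tendsto htd (Filter.Eventually.of_forall hle)) (zero_le)
  have hmeas : AEStronglyMeasurable (P[X|G t] - P[X|F t]) P :=
    ((stronglyMeasurable_condExp.mono (G.le t)).sub
      (stronglyMeasurable_condExp.mono (F.le t))).aestronglyMeasurable
  rw [eLpNorm_eq_zero_iff hmeas one_ne_zero] at h0
  filter_upwards [h0] with ω hω
  exact sub_eq_zero.1 hω

/-- Brémaud–Yor: immersion of `𝔽` in `𝔾` implies that `F_∞` and `G_t`
are conditionally independent given `F_t`. -/
theorem immersion_implies_conditional_independence
    {m : MeasurableSpace Ω} (P : Measure Ω) [IsProbabilityMeasure P]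
    (F G : Filtration ℝ≥0 m) (hFG : ∀ t, (F t : MeasurableSpace Ω) ≤ G t)
    -- immersion: every `𝔽`-martingale is a `𝔾`-martingale
    (himm : ∀ M : ℝ≥0 → Ω → ℝ, Martingale M F P → Martingale M G P) :
    ∀ t : ℝ≥0, ∀ X Y : Ω → ℝ,
      StronglyMeasurable[⨆ s : ℝ≥0, (F s : MeasurableSpace Ω)] X →
      StronglyMeasurable[G t] Y →
      (∃ CX : ℝ, ∀ ω, |X ω| ≤ CX) → (∃ CY : ℝ, ∀ ω, |Y ω| ≤ CY) →
      P[fun ω => X ω * Y ω|F t] =ᵐ[P]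
        fun ω => (P[X|F t]) ω * (P[Y|F t]) ω := by
  intro t X Y hX hY hbX hbY
  obtain ⟨CX, hCX⟩ := hbX
  obtain ⟨CY, hCY⟩ := hbY
  have hXsm : AEStronglyMeasurable X P :=
    (hX.mono (iSup_le fun s => F.le s)).aestronglyMeasurable
  have hYsm : AEStronglyMeasurable Y P := (hY.mono (G.le t)).aestronglyMeasurable
  have hXint : Integrable X P := integrable_of_abs_le hXsm hCX
  have hYint : Integrable Y P := integrable_of_abs_le hYsm hCY
  have hYX : Integrable (fun ω => Y ω * X ω) P :=
    hXint.bdd_mul hYsm (Filter.Eventually.of_forall fun ω => by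
      simpa [Real.norm_eq_abs] using hCY ω)
  set Z : Ω → ℝ := P[X|F t] with hZ
  have hkey : P[X|G t] =ᵐ[P] Z := condexp_eq_of_immersion P F G himm t hXint hX
  have h1 : P[fun ω => X ω * Y ω|F t] =ᵐ[P] P[P[fun ω => X ω * Y ω|G t]|F t] :=
    (condExp_condExp_of_le (hFG t) (G.le t)).symm
  have h2 : P[fun ω => X ω * Y ω|G t] =ᵐ[P] fun ω => Y ω * (P[X|G t]) ω := by
    have hcomm : (fun ω => X ω * Y ω) = fun ω => Y ω * X ω := funext fun ω => mul_comm _ _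
    rw [hcomm]
    exact condExp_mul_of_stronglyMeasurable_left hY hYX hXint
  have h3 : (fun ω => Y ω * (P[X|G t]) ω) =ᵐ[P] fun ω => Z ω * Y ω := by
    filter_upwards [hkey] with ω hω
    rw [hω, mul_comm]
  have hZY : Integrable (fun ω => Z ω * Y ω) P := by
    have : Integrable (fun ω => Y ω * Z ω) P :=
      integrable_condExp.bdd_mul hYsm (Filter.Eventually.of_forall fun ω => by
        simpa [Real.norm_eq_abs] using hCY ω)
    exact this.congr (Filter.Eventually.of_forall fun ω => mul_comm _ _)
  have h4 : P[fun ω => Z ω * Y ω|F t] =ᵐ[P] fun ω => Z ω * (P[Y|F t]) ω :=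
    condExp_mul_of_stronglyMeasurable_left stronglyMeasurable_condExp hZY hYint
  exact h1.trans ((condExp_congr_ae (h2.trans h3)).trans h4)
end
end

section
/- Conversely, if for every t the σ-algebras F_∞ and G_t are conditionally independent given F_t under P (with F_t ⊆ G_t for all t), then 𝔽 is immersed in 𝔾: every bounded 𝔽-martingale is a 𝔾-martingale. -/
open MeasureTheory MeasurableSpace Set Filter Function
open scoped ENNReal NNReal Topology

noncomputable section

variable {Ω : Type*}

/-- conversely, conditional independence of `F_∞` and `G_t` given `F_t`
for all `t` implies that every bounded `𝔽`-martingale is a `𝔾`-martingale. -/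
theorem conditional_independence_implies_immersion
    {m : MeasurableSpace Ω} (P : Measure Ω) [IsProbabilityMeasure P]
    (F G : Filtration ℝ≥0 m) (hFG : ∀ t, (F t : MeasurableSpace Ω) ≤ G t)
    (hci : ∀ t : ℝ≥0, ∀ X Y : Ω → ℝ,
      StronglyMeasurable[⨆ s : ℝ≥0, (F s : MeasurableSpace Ω)] X →
      StronglyMeasurable[G t] Y →
      (∃ CX : ℝ, ∀ ω, |X ω| ≤ CX) → (∃ CY : ℝ, ∀ ω, |Y ω| ≤ CY) →
      P[fun ω => X ω * Y ω|F t] =ᵐ[P]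
        fun ω => (P[X|F t]) ω * (P[Y|F t]) ω) :
    ∀ M : ℝ≥0 → Ω → ℝ, Martingale M F P →
      (∃ C : ℝ, ∀ t ω, |M t ω| ≤ C) → Martingale M G P := by
  
  intro M hM hbdd
  obtain ⟨C, hC⟩ := hbdd
  have hadapt : StronglyAdapted G M := fun s => (hM.stronglyAdapted s).mono (hFG s)
  refine ⟨hadapt, fun i j hij => ?_⟩
  refine (ae_eq_condExp_of_forall_setIntegral_eq (G.le i) (hM.integrable j)
    (fun s _ _ => (hM.integrable i).integrableOn)
    (fun A hA _ => ?_)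
    (StronglyMeasurable.aestronglyMeasurable (hadapt i))).symm
  set Y : Ω → ℝ := A.indicator (fun _ => (1 : ℝ)) with hYdef
  have hAm : MeasurableSet A := G.le i A hA
  have hYm : StronglyMeasurable[G i] Y := stronglyMeasurable_const.indicator hA
  have hYmm : AEStronglyMeasurable Y P := (hYm.mono (G.le i)).aestronglyMeasurable
  have hYbd : ∀ ω, ‖Y ω‖ ≤ 1 := by
    intro ω
    by_cases hω : ω ∈ A <;> simp [hYdef, hω]
  have hY_int : Integrable Y P := (integrable_const (1 : ℝ)).indicator hAm
  have hprod_int : ∀ s : ℝ≥0, Integrable (fun ω => M s ω * Y ω) P := by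
    intro s
    simpa [mul_comm] using (hM.integrable s).bdd_mul hYmm (ae_of_all _ hYbd)
  have hintA : ∀ s : ℝ≥0, ∫ ω in A, M s ω ∂P = ∫ ω, M s ω * Y ω ∂P := by
    intro s
    rw [← integral_indicator hAm]
    congr 1
    ext ω
    by_cases hω : ω ∈ A <;> simp [hYdef, hω]
  have hXm : StronglyMeasurable[⨆ s : ℝ≥0, (F s : MeasurableSpace Ω)] (M j) :=
    (hM.stronglyAdapted j).mono (le_iSup (fun s => (F s : MeasurableSpace Ω)) j)
  have hci' := hci i (M j) Y hXm hYm ⟨C, fun ω => hC j ω⟩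
    ⟨1, fun ω => by simpa [Real.norm_eq_abs] using hYbd ω⟩
  have hMart : P[M j|F i] =ᵐ[P] M i := hM.condExp_ae_eq hij
  have step1 : ∫ ω, M j ω * Y ω ∂P = ∫ ω, (P[fun ω => M j ω * Y ω|F i]) ω ∂P :=
    (integral_condExp (F.le i)).symm
  have step2 : ∫ ω, (P[fun ω => M j ω * Y ω|F i]) ω ∂P
      = ∫ ω, M i ω * (P[Y|F i]) ω ∂P := by
    refine integral_congr_ae (hci'.trans ?_)
    filter_upwards [hMart] with ω hω
    rw [hω]
  have hpull : P[fun ω => M i ω * Y ω|F i] =ᵐ[P] fun ω => M i ω * (P[Y|F i]) ω := by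
    have h := condExp_mul_of_stronglyMeasurable_left (μ := P) (m := F i) (hM.stronglyAdapted i)
      (by simpa [Pi.mul_def] using hprod_int i) hY_int
    simpa [Pi.mul_def] using h
  have step3 : ∫ ω, M i ω * (P[Y|F i]) ω ∂P = ∫ ω, M i ω * Y ω ∂P := by
    rw [integral_congr_ae hpull.symm, integral_condExp (F.le i)]
  rw [hintA i, hintA j, step1, step2, step3]
end
end

section
/- Let P and Q be probability measures on (Ω, 𝒢) and let ℱ ⊆ 𝒢 and ℋ ⊆ 𝒢 be sub-σ-algebras with ℱ ⊆ ℋ, and let C ∈ 𝒢 be an event. Assume: (a) P = Q on a σ-algebra ℳ ⊆ 𝒢 with ℱ ⊆ ℳ; (b) P(C | ℱ) = Q(C | ℱ) almost surely; (c) under both P and Q, ℳ and σ(ℱ ∪ {C}) are conditionally independent given ℱ. Then P(A ∩ C) = Q(A ∩ C) for every A ∈ ℳ, hence P = Q on ℳ ∨ σ(C). -/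
open MeasureTheory MeasurableSpace Set Filter Function
open scoped ENNReal NNReal Topology

noncomputable section

variable {Ω : Type*}

/-- the inductive step. If `P = Q` on `ℳ`, the conditional probabilities of `C`
given `ℱ` agree, and `ℳ` and `σ(ℱ ∪ {C})` are conditionally independent given `ℱ` under both
measures, then `P(A ∩ C) = Q(A ∩ C)` for `A ∈ ℳ`, hence `P = Q` on `ℳ ∨ σ(C)`. -/
theorem inductive_step_measures_agree
    {𝒢 : MeasurableSpace Ω} (P Q : Measure Ω)
    [IsProbabilityMeasure P] [IsProbabilityMeasure Q]
    (ℱ ℳ : MeasurableSpace Ω) (hFM : ℱ ≤ ℳ) (hM : ℳ ≤ 𝒢)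
    (C : Set Ω) (hCmeas : MeasurableSet[𝒢] C)
    -- (a) `P = Q` on `ℳ`
    (hPQ : ∀ A : Set Ω, MeasurableSet[ℳ] A → P A = Q A)
    -- (b) the conditional probabilities of `C` given `ℱ` agree
    (hcond : P[Set.indicator C (fun _ => (1 : ℝ))|ℱ] =ᵐ[P]
      Q[Set.indicator C (fun _ => (1 : ℝ))|ℱ])
    -- (c) conditional independence of `ℳ` and `σ(ℱ ∪ {C})` given `ℱ`, under `P` and `Q`
    (hciP : ∀ A : Set Ω, MeasurableSet[ℳ] A →
      P[Set.indicator (A ∩ C) (fun _ => (1 : ℝ))|ℱ] =ᵐ[P]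
        fun ω => (P[Set.indicator A (fun _ => (1 : ℝ))|ℱ]) ω *
          (P[Set.indicator C (fun _ => (1 : ℝ))|ℱ]) ω)
    (hciQ : ∀ A : Set Ω, MeasurableSet[ℳ] A →
      Q[Set.indicator (A ∩ C) (fun _ => (1 : ℝ))|ℱ] =ᵐ[Q]
        fun ω => (Q[Set.indicator A (fun _ => (1 : ℝ))|ℱ]) ω *
          (Q[Set.indicator C (fun _ => (1 : ℝ))|ℱ]) ω) :
    (∀ A : Set Ω, MeasurableSet[ℳ] A → P (A ∩ C) = Q (A ∩ C)) ∧
    (∀ B : Set Ω, MeasurableSet[ℳ ⊔ MeasurableSpace.generateFrom {C}] B → P B = Q B) := by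
  classical
  have hF : ℱ ≤ 𝒢 := hFM.trans hM
  -- P and Q agree when trimmed to ℱ
  have htrimF : P.trim hF = Q.trim hF := by
    letI : MeasurableSpace Ω := ℱ
    refine Measure.ext fun s hs => ?_
    rw [trim_measurableSet_eq hF hs, trim_measurableSet_eq hF hs]
    exact hPQ s (hFM s hs)
  letI _inst : MeasurableSpace Ω := 𝒢
  haveI : SigmaFinite (P.trim hF) := by
    have : IsFiniteMeasure (P.trim hF) := ⟨by
      rw [trim_measurableSet_eq hF MeasurableSet.univ]; exact measure_lt_top _ _⟩
    infer_instance
  haveI : SigmaFinite (Q.trim hF) := by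
    have : IsFiniteMeasure (Q.trim hF) := ⟨by
      rw [trim_measurableSet_eq hF MeasurableSet.univ]; exact measure_lt_top _ _⟩
    infer_instance
  -- conditional expectations given ℱ agree for ℳ-measurable indicators
  have key : ∀ A : Set Ω, MeasurableSet[ℳ] A →
      P[Set.indicator A (fun _ => (1 : ℝ))|ℱ] =ᵐ[P]
        Q[Set.indicator A (fun _ => (1 : ℝ))|ℱ] := by
    intro A hA
    have hAG : MeasurableSet[𝒢] A := hM A hA
    have hfP : Integrable (Set.indicator A (fun _ => (1 : ℝ))) P :=
      (integrable_const (1 : ℝ)).indicator hAG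
    have hgQint : Integrable (Q[Set.indicator A (fun _ => (1 : ℝ))|ℱ]) Q :=
      integrable_condExp
    have hgm : StronglyMeasurable[ℱ] (Q[Set.indicator A (fun _ => (1 : ℝ))|ℱ]) :=
      stronglyMeasurable_condExp
    have hgPint : Integrable (Q[Set.indicator A (fun _ => (1 : ℝ))|ℱ]) P := by
      have h1 : Integrable (Q[Set.indicator A (fun _ => (1 : ℝ))|ℱ]) (Q.trim hF) :=
        hgQint.trim hF hgm
      rw [← htrimF] at h1
      exact integrable_of_integrable_trim hF h1
    refine (ae_eq_condExp_of_forall_setIntegral_eq hF hfP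
      (fun s _ _ => hgPint.integrableOn) ?_ hgm.aestronglyMeasurable).symm
    intro s hs _
    have hsG : MeasurableSet[𝒢] s := hF s hs
    have e1 : ∫ x in s, (Q[Set.indicator A (fun _ => (1 : ℝ))|ℱ]) x ∂P
        = ∫ x in s, (Q[Set.indicator A (fun _ => (1 : ℝ))|ℱ]) x ∂Q := by
      rw [setIntegral_trim hF hgm hs, htrimF, ← setIntegral_trim hF hgm hs]
    have hfQ : Integrable (Set.indicator A (fun _ => (1 : ℝ))) Q :=
      (integrable_const (1 : ℝ)).indicator hAG
    have e2 : ∫ x in s, (Q[Set.indicator A (fun _ => (1 : ℝ))|ℱ]) x ∂Q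
        = ∫ x in s, Set.indicator A (fun _ => (1 : ℝ)) x ∂Q :=
      setIntegral_condExp hF hfQ hs
    have e3 : ∀ (μ : Measure Ω), IsProbabilityMeasure μ →
        ∫ x in s, Set.indicator A (fun _ => (1 : ℝ)) x ∂μ = (μ (s ∩ A)).toReal := by
      intro μ _
      rw [setIntegral_indicator hAG]
      simp [Measure.restrict_apply hsG]
      rfl
    rw [e1, e2, e3 Q inferInstance, e3 P inferInstance,
      hPQ (s ∩ A) ((hFM s hs).inter hA)]
  -- the integral computation for A ∩ C
  have main : ∀ A : Set Ω, MeasurableSet[ℳ] A → P (A ∩ C) = Q (A ∩ C) := by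
    intro A hA
    have hACG : MeasurableSet[𝒢] (A ∩ C) := (hM A hA).inter hCmeas
    have hfPint : Integrable (Set.indicator (A ∩ C) (fun _ => (1 : ℝ))) P :=
      (integrable_const (1 : ℝ)).indicator hACG
    have hfQint : Integrable (Set.indicator (A ∩ C) (fun _ => (1 : ℝ))) Q :=
      (integrable_const (1 : ℝ)).indicator hACG
    have hind : ∀ (μ : Measure Ω),
        ∫ x, Set.indicator (A ∩ C) (fun _ => (1 : ℝ)) x ∂μ = (μ (A ∩ C)).toReal := by
      intro μ
      rw [integral_indicator hACG]
      simp
      rfl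
    -- the ℱ-measurable product under Q
    have hgm : StronglyMeasurable[ℱ] (fun ω => (Q[Set.indicator A (fun _ => (1 : ℝ))|ℱ]) ω *
        (Q[Set.indicator C (fun _ => (1 : ℝ))|ℱ]) ω) :=
      stronglyMeasurable_condExp.mul stronglyMeasurable_condExp
    have hPprod : (fun ω => (P[Set.indicator A (fun _ => (1 : ℝ))|ℱ]) ω *
        (P[Set.indicator C (fun _ => (1 : ℝ))|ℱ]) ω) =ᵐ[P]
        (fun ω => (Q[Set.indicator A (fun _ => (1 : ℝ))|ℱ]) ω *
        (Q[Set.indicator C (fun _ => (1 : ℝ))|ℱ]) ω) := by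
      filter_upwards [key A hA, hcond] with ω h1 h2
      simp only [h1, h2]
    have calc1 : (P (A ∩ C)).toReal
        = ∫ x, ((Q[Set.indicator A (fun _ => (1 : ℝ))|ℱ]) x *
            (Q[Set.indicator C (fun _ => (1 : ℝ))|ℱ]) x) ∂P :=
      calc (P (A ∩ C)).toReal
          = ∫ x, Set.indicator (A ∩ C) (fun _ => (1 : ℝ)) x ∂P := (hind P).symm
        _ = ∫ x, (P[Set.indicator (A ∩ C) (fun _ => (1 : ℝ))|ℱ]) x ∂P :=
            (integral_condExp hF).symm
        _ = _ := integral_congr_ae ((hciP A hA).trans hPprod)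
    have calc2 : (Q (A ∩ C)).toReal
        = ∫ x, ((Q[Set.indicator A (fun _ => (1 : ℝ))|ℱ]) x *
            (Q[Set.indicator C (fun _ => (1 : ℝ))|ℱ]) x) ∂Q :=
      calc (Q (A ∩ C)).toReal
          = ∫ x, Set.indicator (A ∩ C) (fun _ => (1 : ℝ)) x ∂Q := (hind Q).symm
        _ = ∫ x, (Q[Set.indicator (A ∩ C) (fun _ => (1 : ℝ))|ℱ]) x ∂Q :=
            (integral_condExp hF).symm
        _ = _ := integral_congr_ae (hciQ A hA)
    have calc3 : ∫ x, ((Q[Set.indicator A (fun _ => (1 : ℝ))|ℱ]) x *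
            (Q[Set.indicator C (fun _ => (1 : ℝ))|ℱ]) x) ∂P
        = ∫ x, ((Q[Set.indicator A (fun _ => (1 : ℝ))|ℱ]) x *
            (Q[Set.indicator C (fun _ => (1 : ℝ))|ℱ]) x) ∂Q := by
      rw [integral_trim hF hgm, htrimF, ← integral_trim hF hgm]
    have : (P (A ∩ C)).toReal = (Q (A ∩ C)).toReal := by rw [calc1, calc3, ← calc2]
    exact (ENNReal.toReal_eq_toReal_iff' (measure_ne_top P _) (measure_ne_top Q _)).mp this
  refine ⟨main, ?_⟩
  -- extend to ℳ ⊔ σ(C) by a π-system argument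
  set m : MeasurableSpace Ω := ℳ ⊔ MeasurableSpace.generateFrom {C} with hm_def
  have hCm : MeasurableSet[m] C :=
    (le_sup_right : MeasurableSpace.generateFrom {C} ≤ m) C
      (MeasurableSpace.measurableSet_generateFrom rfl)
  have hMm : ℳ ≤ m := le_sup_left
  have hm : m ≤ 𝒢 := by
    refine sup_le hM (MeasurableSpace.generateFrom_le ?_)
    intro s hs
    rw [Set.mem_singleton_iff] at hs
    subst hs
    exact hCmeas
  have hinter : ∀ A B : Set Ω, (A ∩ C) ∩ (B ∩ C) = (A ∩ B) ∩ C := by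
    intro A B; ext x; simp only [Set.mem_inter_iff]; tauto
  have hinter2 : ∀ A B : Set Ω, A ∩ (B ∩ C) = (A ∩ B) ∩ C := by
    intro A B; ext x; simp only [Set.mem_inter_iff]; tauto
  have hinter3 : ∀ A B : Set Ω, (A ∩ C) ∩ B = (A ∩ B) ∩ C := by
    intro A B; ext x; simp only [Set.mem_inter_iff]; tauto
  have hgen : m = MeasurableSpace.generateFrom
      {s | ∃ A : Set Ω, MeasurableSet[ℳ] A ∧ (s = A ∨ s = A ∩ C)} := by
    refine le_antisymm (sup_le ?_ (MeasurableSpace.generateFrom_le ?_))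
      (MeasurableSpace.generateFrom_le ?_)
    · intro s hs
      exact MeasurableSpace.measurableSet_generateFrom ⟨s, hs, Or.inl rfl⟩
    · intro s hs
      rw [Set.mem_singleton_iff] at hs
      subst hs
      exact MeasurableSpace.measurableSet_generateFrom
        ⟨Set.univ, MeasurableSet.univ, Or.inr (by simp)⟩
    · rintro s ⟨A, hA, rfl | rfl⟩
      · exact hMm _ hA
      · exact (hMm _ hA).inter hCm
  have hpi : IsPiSystem {s | ∃ A : Set Ω, MeasurableSet[ℳ] A ∧ (s = A ∨ s = A ∩ C)} := by
    rintro s ⟨A, hA, hsA⟩ t ⟨B, hB, htB⟩ -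
    rcases hsA with rfl | rfl <;> rcases htB with rfl | rfl
    · exact ⟨_ ∩ _, hA.inter hB, Or.inl rfl⟩
    · exact ⟨_ ∩ _, hA.inter hB, Or.inr (hinter2 _ _)⟩
    · exact ⟨_ ∩ _, hA.inter hB, Or.inr (hinter3 _ _)⟩
    · exact ⟨_ ∩ _, hA.inter hB, Or.inr (hinter _ _)⟩
  letI _inst2 : MeasurableSpace Ω := m
  haveI hfinP : IsFiniteMeasure (P.trim hm) := ⟨by
    rw [trim_measurableSet_eq hm MeasurableSet.univ]; exact measure_lt_top _ _⟩
  have htrimm : P.trim hm = Q.trim hm := by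
    refine ext_of_generate_finite _ hgen hpi ?_ ?_
    · rintro s ⟨A, hA, rfl | rfl⟩
      · rw [trim_measurableSet_eq hm (hMm _ hA), trim_measurableSet_eq hm (hMm _ hA)]
        exact hPQ _ hA
      · rw [trim_measurableSet_eq hm ((hMm _ hA).inter hCm),
          trim_measurableSet_eq hm ((hMm _ hA).inter hCm)]
        exact main _ hA
    · rw [trim_measurableSet_eq hm MeasurableSet.univ,
        trim_measurableSet_eq hm MeasurableSet.univ]
      simp
  intro B hB
  rw [← trim_measurableSet_eq hm hB, ← trim_measurableSet_eq hm hB, htrimm]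
end
end

section
/- Let τ₁ be a naturally accessible random time, i.e. accessible as a stopping time of its own minimal filtration σ(τ₁ ∧ ·). Then the law of τ₁ restricted to [0,∞) is purely atomic, and conversely if the law of τ₁ on [0,∞) is purely atomic with atoms (tₙ), then τ₁ is a thin time for every filtration, with exhausting sequence the constant times (tₙ), which are predictable stopping times for every filtration. -/
open MeasureTheory MeasurableSpace Set Filter Function
open scoped ENNReal NNReal Topology

noncomputable section

variable {Ω : Type*}

/-- Any stopping time of the minimal filtration of `τ` is a.s. constant on `{S < τ}`. -/
lemma exists_const_of_minimal_stoppingTime (τ S : Ω → ℝ≥0∞)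
    (hS : IsStoppingTimeE (fun t : ℝ≥0 => MeasurableSpace.comap
      (fun ω => min (τ ω) (t : ℝ≥0∞)) inferInstance) S) :
    ∃ c : ℝ≥0∞, ∀ ω, S ω < τ ω → S ω = c := by
  classical
  set T : Set ℝ≥0 := {t | ∀ ω, (t : ℝ≥0∞) < τ ω → S ω ≤ (t : ℝ≥0∞)} with hTdef
  have key : ∀ t : ℝ≥0, ∀ ω₀ : Ω, S ω₀ ≤ (t : ℝ≥0∞) → (t : ℝ≥0∞) < τ ω₀ → t ∈ T := by
    intro t ω₀ h1 h2
    obtain ⟨B, -, hB⟩ := MeasurableSpace.measurableSet_comap.mp (hS t)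
    intro ω hω
    have hmem : (min (τ ω₀) (t : ℝ≥0∞)) ∈ B := by
      have : ω₀ ∈ (fun ω => min (τ ω) (t : ℝ≥0∞)) ⁻¹' B := by rw [hB]; exact h1
      exact this
    have hmin₀ : min (τ ω₀) (t : ℝ≥0∞) = (t : ℝ≥0∞) := min_eq_right h2.le
    have hmin : min (τ ω) (t : ℝ≥0∞) = (t : ℝ≥0∞) := min_eq_right hω.le
    have : ω ∈ (fun ω => min (τ ω) (t : ℝ≥0∞)) ⁻¹' B := by
      simp only [Set.mem_preimage, hmin]
      rwa [hmin₀] at hmem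
    rw [hB] at this
    exact this
  refine ⟨⨅ t : T, ((t : ℝ≥0) : ℝ≥0∞), fun ω hω => ?_⟩
  have hSfin : S ω ≠ ∞ := (lt_of_lt_of_le hω le_top).ne
  set t₀ : ℝ≥0 := (S ω).toNNReal with ht₀
  have ht₀eq : ((t₀ : ℝ≥0) : ℝ≥0∞) = S ω := ENNReal.coe_toNNReal hSfin
  have ht₀T : t₀ ∈ T := key t₀ ω ht₀eq.ge (ht₀eq ▸ hω)
  have h1 : (⨅ t : T, ((t : ℝ≥0) : ℝ≥0∞)) ≤ S ω := by
    refine le_trans (iInf_le _ (⟨t₀, ht₀T⟩ : T)) ht₀eq.le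
  refine le_antisymm ?_ h1
  by_contra h
  push_neg at h
  obtain ⟨⟨t, htT⟩, ht⟩ := iInf_lt_iff.mp h
  exact absurd (htT ω (lt_trans ht hω)) (not_le.mpr ht)

/-- a naturally accessible random time has purely atomic law on `[0,∞)`;
conversely, a random time with purely atomic law on `[0,∞)` with atoms `(tₙ)` is thin for
every filtration, with exhausting sequence the constant times `(tₙ)`, which are predictable
stopping times for every filtration. -/
theorem naturally_accessible_iff_atomic
    {m : MeasurableSpace Ω} (P : Measure Ω) [IsProbabilityMeasure P]
    (τ₁ : Ω → ℝ≥0∞) (hτ₁ : Measurable τ₁) :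
    -- direct part: naturally accessible ⇒ purely atomic law on `[0,∞)`
    ((∃ R : ℕ → Ω → ℝ≥0∞,
        (∀ n, IsPredictableTimeE
          (fun t : ℝ≥0 => MeasurableSpace.comap
            (fun ω => min (τ₁ ω) (t : ℝ≥0∞)) inferInstance) (R n)) ∧
        (∀ᵐ ω ∂P, τ₁ ω < ∞ → ∃ n, τ₁ ω = R n ω)) →
      ∃ D : Set ℝ≥0∞, D.Countable ∧ P {ω | τ₁ ω < ∞ ∧ τ₁ ω ∉ D} = 0) ∧
    -- converse: atoms `(tₙ)` give a predictable constant exhausting sequence in any filtration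
    (∀ tval : ℕ → ℝ≥0, Function.Injective tval →
      P {ω | τ₁ ω < ∞ ∧ ∀ n, τ₁ ω ≠ (tval n : ℝ≥0∞)} = 0 →
      ∀ F : ℝ≥0 → MeasurableSpace Ω,
        (∀ n, IsPredictableTimeE F (fun _ => (tval n : ℝ≥0∞))) ∧
        (∀ n k, n ≠ k → ∀ ω : Ω, ¬((tval n : ℝ≥0∞) = (tval k : ℝ≥0∞) ∧ (tval n : ℝ≥0∞) < ∞)) ∧
        (∀ᵐ ω ∂P, τ₁ ω < ∞ → ∃ n, τ₁ ω = (tval n : ℝ≥0∞))) := by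
  constructor
  · -- direct part
    rintro ⟨R, hR, hae⟩
    have hmain : ∀ n, ∃ d : ℝ≥0∞, ∀ ω, 0 < τ₁ ω → τ₁ ω = R n ω → τ₁ ω = d := by
      intro n
      obtain ⟨hst, Tk, hTk, hmono, hle, hlt, hlim⟩ := hR n
      choose c hc using fun k => exists_const_of_minimal_stoppingTime τ₁ (Tk k) (hTk k)
      refine ⟨Filter.limsup (fun k => c k) Filter.atTop, ?_⟩
      intro ω h0 heq
      have hRpos : 0 < R n ω := heq ▸ h0
      have hck : ∀ k, Tk k ω = c k := fun k =>
        hc k ω (by rw [heq]; exact hlt k ω hRpos)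
      have hlim' : Tendsto (fun k => c k) atTop (nhds (τ₁ ω)) := by
        rw [heq]
        exact (hlim ω).congr hck
      exact hlim'.limsup_eq.symm
    choose d hd using hmain
    refine ⟨insert 0 (Set.range d), (Set.countable_range d).insert 0, ?_⟩
    refine measure_mono_null (fun ω hω => ?_) (ae_iff.mp hae)
    intro himp
    obtain ⟨n, hn⟩ := himp hω.1
    rcases eq_or_lt_of_le (zero_le : 0 ≤ τ₁ ω) with h0 | h0
    · exact hω.2 (by rw [← h0]; exact Set.mem_insert _ _)
    · exact hω.2 (Set.mem_insert_of_mem _ ⟨n, (hd n ω h0 hn).symm⟩)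
  · -- converse part
    intro tval hinj hnull F
    have hconst : ∀ (c : ℝ≥0∞), IsStoppingTimeE F (fun _ => c) := by
      intro c t
      by_cases h : c ≤ (t : ℝ≥0∞)
      · simpa [h] using (MeasurableSet.univ : MeasurableSet[F t] Set.univ)
      · simpa [h] using (MeasurableSet.empty : MeasurableSet[F t] ∅)
    refine ⟨fun n => ?_, fun n k hnk ω hcontra => ?_, ?_⟩
    · refine ⟨hconst _, fun k _ => (tval n : ℝ≥0∞) - ((k : ℝ≥0∞) + 1)⁻¹,
        fun k => hconst _, fun k ω => ?_, fun k ω => tsub_le_self, fun k ω h0 => ?_, fun ω => ?_⟩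
      · refine tsub_le_tsub_left (ENNReal.inv_le_inv.mpr ?_) _
        push_cast
        exact le_add_of_nonneg_right (by norm_num)
      · refine ENNReal.sub_lt_self ENNReal.coe_ne_top h0.ne' ?_
        exact ENNReal.inv_ne_zero.mpr (by simp [ENNReal.add_eq_top])
      · have h1 : Tendsto (fun k : ℕ => ((k : ℝ≥0∞) + 1)⁻¹) atTop (nhds 0) := by
          have := (ENNReal.tendsto_inv_nat_nhds_zero).comp (tendsto_add_atTop_nat 1)
          simpa [Function.comp_def] using this
        have := ENNReal.Tendsto.sub (tendsto_const_nhds (x := (tval n : ℝ≥0∞))) h1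
          (Or.inl ENNReal.coe_ne_top)
        simpa using this
    · exact hnk (hinj (by exact_mod_cast hcontra.1))
    · rw [ae_iff]
      refine measure_mono_null (fun ω hω => ?_) hnull
      simp only [Set.mem_setOf_eq] at hω
      push_neg at hω
      exact hω
end
end
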